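/- arXiv:2101.05720 — 4 statements merged into one kernel-verified Lean document; each statement's English description precedes it below -/
import Mathlib

section
/- Let p be an odd prime and G a finite p-group such that every subgroup of index p^i in G is powerful, where i ≤ p−3. Then G is potent, i.e. γ_{p−1}(G) ≤ G^p. -/
/-- A finite `p`-group (`p` odd) is powerful if `[G,G] ≤ G^p`. -/
def IsPowerfulOdd (p : ℕ) (G : Type*) [Group G] : Prop :=
  commutator G ≤ Subgroup.closure {x : G | ∃ g : G, g ^ p = x}

/-!
Put `Q = G / G^p`, a group of exponent `p`. A subgroup of index `p^i` in `Q` is the image of one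
of index `p^i` in `G`, which is powerful, so it is abelian. If `|Q| ≤ p^(i+2)`, then `Q` has class
at most `i + 1 ≤ p - 2`, since a group of order `p^n` has class at most `n - 1`. Otherwise `Q` is
abelian, by induction on `i` from the case of maximal subgroups: if non-commuting `x`, `y` lie in
abelian maximal subgroups `M₁`, `M₂`, then `M₁ ∩ M₂` is central, so `G'` is generated by the
central element `[x, y]`, `G / G'` by the images of `x` and `y`, and `|G| ≤ p^3`.
-/

open Subgroup
open scoped commutatorElement

section

variable {G : Type*} [Group G]

instance closure_pow_normal (n : ℕ) : (closure {x : G | ∃ g : G, g ^ n = x}).Normal := by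
  have hconj :
      Group.conjugatesOfSet {x : G | ∃ g : G, g ^ n = x} ⊆ {x | ∃ g : G, g ^ n = x} := by
    intro x hx
    obtain ⟨_, ⟨g, rfl⟩, hconj⟩ := Group.mem_conjugatesOfSet_iff.mp hx
    obtain ⟨c, rfl⟩ := isConj_iff.mp hconj
    exact ⟨c * g * c⁻¹, conj_pow⟩
  have : closure {x : G | ∃ g : G, g ^ n = x} = normalClosure {x | ∃ g : G, g ^ n = x} :=
    le_antisymm ((closure_le _).mpr subset_normalClosure) (closure_mono hconj)
  rw [this]
  infer_instance

theorem IsPGroup.of_forall_pow_eq_one {p : ℕ} (h : ∀ g : G, g ^ p = 1) : IsPGroup p G :=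
  fun g => ⟨1, by rw [pow_one, h]⟩

theorem Subgroup.normal_of_le_center {H : Subgroup G} (h : H ≤ center G) : H.Normal :=
  ⟨fun n hn g => by rwa [mem_center_iff.mp (h hn) g, mul_inv_cancel_right]⟩

theorem Subgroup.inf_le_center_of_sup_eq_top {M₁ M₂ : Subgroup G} [IsMulCommutative M₁]
    [IsMulCommutative M₂] (h : M₁ ⊔ M₂ = ⊤) : M₁ ⊓ M₂ ≤ center G := by
  have h₁ : M₁ ≤ centralizer (M₁ ⊓ M₂ : Subgroup G) :=
    le_centralizer_iff.mpr (inf_le_left.trans (le_centralizer_iff_isMulCommutative.mpr ‹_›))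
  have h₂ : M₂ ≤ centralizer (M₁ ⊓ M₂ : Subgroup G) :=
    le_centralizer_iff.mpr (inf_le_right.trans (le_centralizer_iff_isMulCommutative.mpr ‹_›))
  rw [← centralizer_univ, ← coe_top, le_centralizer_iff, ← h]
  exact sup_le h₁ h₂

theorem commutator_le_of_closure_pair_eq_top {x y : G} (hxy : closure {x, y} = ⊤)
    {N : Subgroup G} [N.Normal] (h : ⁅x, y⁆ ∈ N) : commutator G ≤ N := by
  rw [← Normal.quotient_commutative_iff_commutator_le]
  set π := QuotientGroup.mk' N
  have hgen : closure {π x, π y} = ⊤ := by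
    rw [← Set.image_pair, ← MonoidHom.map_closure, hxy,
      map_top_of_surjective _ (QuotientGroup.mk'_surjective N)]
  have hcomm : π x * π y = π y * π x := by
    rw [← commutatorElement_eq_one_iff_mul_comm, ← map_commutatorElement]
    exact (QuotientGroup.eq_one_iff _).mpr h
  have := isMulCommutative_closure (k := {π x, π y}) (by
    simp only [Set.mem_insert_iff, Set.mem_singleton_iff]
    rintro a (rfl | rfl) b (rfl | rfl) <;> first | rfl | exact hcomm | exact hcomm.symm)
  exact isMulCommutative_iff.mpr fun a b =>
    setLike_mul_comm (hgen ▸ mem_top a : a ∈ closure {π x, π y}) (hgen ▸ mem_top b)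

theorem card_le_orderOf_mul_orderOf_of_closure_pair_eq_top {A : Type*} [CommGroup A] [Finite A]
    {u v : A} (h : closure {u, v} = ⊤) : Nat.card A ≤ orderOf u * orderOf v := by
  have hsurj : Function.Surjective fun ab : zpowers u × zpowers v => (ab.1 : A) * ab.2 := by
    intro a
    obtain ⟨m, n, rfl⟩ := mem_closure_pair.mp (h ▸ mem_top a)
    exact ⟨(⟨u ^ m, zpow_mem_zpowers u m⟩, ⟨v ^ n, zpow_mem_zpowers v n⟩), rfl⟩
  calc Nat.card A ≤ Nat.card (zpowers u × zpowers v) := Nat.card_le_card_of_surjective _ hsurj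
    _ = orderOf u * orderOf v := by rw [Nat.card_prod, Nat.card_zpowers, Nat.card_zpowers]

theorem card_le_pow_three_of_closure_pair_eq_top [Finite G] {p : ℕ} (hp : 0 < p)
    (hexp : ∀ g : G, g ^ p = 1) {x y : G} (hxy : closure {x, y} = ⊤)
    (hcomm : commutator G ≤ center G) : Nat.card G ≤ p ^ 3 := by
  have hcomm_card : Nat.card (commutator G) ≤ p := by
    have := normal_of_le_center
      (zpowers_le.mpr (hcomm (commutator_mem_commutator (mem_top x) (mem_top y))))
    calc Nat.card (commutator G) ≤ Nat.card (zpowers ⁅x, y⁆) :=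
          card_le_of_le (commutator_le_of_closure_pair_eq_top hxy (mem_zpowers _))
      _ ≤ p := by rw [Nat.card_zpowers]; exact orderOf_le_of_pow_eq_one hp (hexp _)
  have hab_card : (commutator G).index ≤ p ^ 2 := by
    have hgen : closure {Abelianization.of x, Abelianization.of y} = ⊤ := by
      rw [← Set.image_pair, ← MonoidHom.map_closure, hxy,
        map_top_of_surjective _ QuotientGroup.mk_surjective]
    have hord : ∀ g : G, orderOf (Abelianization.of g) ≤ p := fun g =>
      orderOf_le_of_pow_eq_one hp (by rw [← map_pow, hexp, map_one])
    calc (commutator G).index = Nat.card (Abelianization G) := rfl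
      _ ≤ _ := card_le_orderOf_mul_orderOf_of_closure_pair_eq_top hgen
      _ ≤ p ^ 2 := by rw [sq]; exact Nat.mul_le_mul (hord x) (hord y)
  calc Nat.card G = Nat.card (commutator G) * (commutator G).index :=
        ((commutator G).card_mul_index).symm
    _ ≤ p * p ^ 2 := Nat.mul_le_mul hcomm_card hab_card
    _ = p ^ 3 := by ring

theorem IsPowerfulOdd.isMulCommutative_map {p : ℕ} {Q : Type*} [Group Q] {H : Subgroup G}
    (hH : IsPowerfulOdd p H) (f : G →* Q) (hf : ∀ g : G, f g ^ p = 1) :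
    IsMulCommutative (H.map f) := by
  rw [← commutator_self_eq_bot_iff, ← map_commutator, ← H.map_subtype_commutator, map_map,
    Subgroup.map_eq_bot_iff]
  refine hH.trans ((closure_le _).mpr ?_)
  rintro _ ⟨g, rfl⟩
  simp [hf]

end

section

variable {p : ℕ} [hp : Fact p.Prime] {G : Type*} [Group G] [Finite G]

theorem IsPGroup.exists_index_eq_prime_of_ne_top (hG : IsPGroup p G) {H : Subgroup G}
    (hH : H ≠ ⊤) : ∃ M : Subgroup G, H ≤ M ∧ M.index = p := by
  obtain ⟨k, hk⟩ := hG.index H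
  obtain ⟨n, hn⟩ := IsPGroup.iff_card.mp (hG.to_subgroup H)
  have hk0 : k ≠ 0 := by
    rintro rfl
    exact hH (index_eq_one.mp (by rw [hk, pow_zero]))
  have hcard : Nat.card G = p ^ (n + k - 1) * p := by
    rw [← H.card_mul_index, hn, hk, ← pow_add, ← pow_succ, Nat.sub_add_cancel (by omega)]
  obtain ⟨M, hM, hHM⟩ :=
    Sylow.exists_subgroup_card_pow_prime_le p (hcard ▸ dvd_mul_right _ _) H hn (by omega)
  refine ⟨M, hHM, Nat.eq_of_mul_eq_mul_left (pow_pos hp.out.pos (n + k - 1)) ?_⟩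
  rw [← hM, M.card_mul_index, hcard, hM]

theorem IsPGroup.isMulCommutative_of_card_le_prime_sq (hG : IsPGroup p G)
    (h : Nat.card G ≤ p ^ 2) : IsMulCommutative G := by
  obtain ⟨n, hn⟩ := IsPGroup.iff_card.mp hG
  have : n ≤ 2 := (Nat.pow_le_pow_iff_right hp.out.one_lt).mp (hn ▸ h)
  interval_cases n
  · have : Subsingleton G := (Nat.card_eq_one_iff_unique.mp (hn.trans (pow_zero p))).1
    infer_instance
  · have := isCyclic_of_prime_card (hn.trans (pow_one p))
    infer_instance
  · exact IsPGroup.isMulCommutative_of_card_eq_prime_sq hn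

theorem IsPGroup.card_quotient_center_mul_le [Nontrivial G] (hG : IsPGroup p G) :
    Nat.card (G ⧸ center G) * p ≤ Nat.card G := by
  have hZ : p ∣ Nat.card (center G) :=
    ((hG.to_subgroup (center G)).card_eq_or_dvd).resolve_left
      (Finite.one_lt_card_iff_nontrivial.mpr hG.center_nontrivial).ne'
  rw [card_eq_card_quotient_mul_card_subgroup (center G)]
  exact Nat.mul_le_mul_left _ (Nat.le_of_dvd Nat.card_pos hZ)

theorem IsPGroup.nilpotencyClass_le_of_card_le (hG : IsPGroup p G) {n : ℕ} (hn : 1 ≤ n)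
    (hcard : Nat.card G ≤ p ^ (n + 1)) : Group.nilpotencyClass G ≤ n := by
  induction n, hn using Nat.le_induction generalizing G with
  | base =>
    have := hG.isNilpotent
    have := hG.isMulCommutative_of_card_le_prime_sq hcard
    exact Group.IsNilpotent.nilpotencyClass_le_one_iff.mpr this
  | succ n hn ih =>
    have := hG.isNilpotent
    cases subsingleton_or_nontrivial G
    · simp [Group.nilpotencyClass_zero_iff_subsingleton.mpr ‹_›]
    have hquot : Nat.card (G ⧸ center G) ≤ p ^ (n + 1) := by
      have := hG.card_quotient_center_mul_le
      rw [pow_succ] at hcard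
      exact Nat.le_of_mul_le_mul_right (this.trans hcard) hp.out.pos
    rw [Group.nilpotencyClass_eq_quotient_center_plus_one]
    exact Nat.succ_le_succ (ih (hG.to_quotient _) hquot)

theorem isMulCommutative_of_forall_index_eq_prime (hexp : ∀ g : G, g ^ p = 1)
    (hcard : p ^ 3 < Nat.card G) (hM : ∀ M : Subgroup G, M.index = p → IsMulCommutative M) :
    IsMulCommutative G := by
  have hG : IsPGroup p G := .of_forall_pow_eq_one hexp
  refine isMulCommutative_iff.mpr fun x y => ?_
  by_contra hxy
  have eq_top_of_mem : ∀ H : Subgroup G, x ∈ H → y ∈ H → H = ⊤ := by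
    intro H hx hy
    by_contra hH
    obtain ⟨M, hHM, hMp⟩ := hG.exists_index_eq_prime_of_ne_top hH
    have := hM M hMp
    exact hxy (setLike_mul_comm (hHM hx) (hHM hy))
  have hx : zpowers x ≠ ⊤ := fun h => hxy (setLike_mul_comm (mem_zpowers x) (h ▸ mem_top y))
  have hy : zpowers y ≠ ⊤ := fun h => hxy (setLike_mul_comm (h ▸ mem_top x) (mem_zpowers y))
  obtain ⟨M₁, hxM₁, hM₁⟩ := hG.exists_index_eq_prime_of_ne_top hx
  obtain ⟨M₂, hyM₂, hM₂⟩ := hG.exists_index_eq_prime_of_ne_top hy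
  have := hM M₁ hM₁
  have := hM M₂ hM₂
  have hsup : M₁ ⊔ M₂ = ⊤ :=
    eq_top_of_mem _ (mem_sup_left (hxM₁ (mem_zpowers x))) (mem_sup_right (hyM₂ (mem_zpowers y)))
  have hgen : closure {x, y} = ⊤ :=
    eq_top_of_mem _ (subset_closure (by simp)) (subset_closure (by simp))
  have hZ : Nat.card (G ⧸ center G) ≤ p ^ 2 :=
    calc (center G).index ≤ (M₁ ⊓ M₂).index :=
          Nat.le_of_dvd (Nat.pos_of_ne_zero index_ne_zero_of_finite)
            (index_dvd_of_le (inf_le_center_of_sup_eq_top hsup))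
      _ ≤ M₁.index * M₂.index := index_inf_le
      _ = p ^ 2 := by rw [hM₁, hM₂, sq]
  have hcomm_center : commutator G ≤ center G := by
    have := (hG.to_quotient (center G)).isMulCommutative_of_card_le_prime_sq hZ
    exact Normal.quotient_commutative_iff_commutator_le.mp this
  exact hcard.not_ge (card_le_pow_three_of_closure_pair_eq_top hp.out.pos hexp hgen hcomm_center)

theorem isMulCommutative_of_forall_index_eq_prime_pow (hexp : ∀ g : G, g ^ p = 1) {i : ℕ}
    (hcard : p ^ (i + 2) < Nat.card G)
    (hK : ∀ K : Subgroup G, K.index = p ^ i → IsMulCommutative K) : IsMulCommutative G := by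
  induction i generalizing G with
  | zero =>
    have := hK ⊤ (by simp)
    exact isMulCommutative_iff.mpr fun a b => setLike_mul_comm (mem_top a) (mem_top b)
  | succ i ih =>
    refine isMulCommutative_of_forall_index_eq_prime hexp
      ((Nat.pow_le_pow_right hp.out.pos (by omega)).trans_lt hcard) fun M hM => ?_
    refine ih (fun g => Subtype.ext (by simp [hexp])) ?_ fun K hKi => ?_
    · rw [← M.card_mul_index, hM, pow_succ] at hcard
      exact Nat.lt_of_mul_lt_mul_right hcard
    · have := hK (K.map M.subtype) (by rw [index_map_subtype, hKi, hM, pow_succ])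
      rw [← comap_map_eq_self_of_injective M.subtype_injective K]
      exact comap_injective_isMulCommutative _ M.subtype_injective

theorem nilpotencyClass_le_of_forall_index_eq_prime_pow (hexp : ∀ g : G, g ^ p = 1) {i : ℕ}
    (hK : ∀ K : Subgroup G, K.index = p ^ i → IsMulCommutative K) :
    Group.nilpotencyClass G ≤ i + 1 := by
  have hG : IsPGroup p G := .of_forall_pow_eq_one hexp
  have := hG.isNilpotent
  by_cases hcard : p ^ (i + 2) < Nat.card G
  · have := isMulCommutative_of_forall_index_eq_prime_pow hexp hcard hK
    exact (Group.IsNilpotent.nilpotencyClass_le_one_iff.mpr this).trans (by omega)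
  · exact hG.nilpotencyClass_le_of_card_le (by omega) (not_lt.mp hcard)

end

theorem stmt1_general (p i : ℕ) (hp : p.Prime) (hodd : Odd p) (G : Type*) [Group G] [Finite G]
    (hi : i ≤ p - 3)
    (hM : ∀ H : Subgroup G, H.index = p ^ i → IsPowerfulOdd p H) :
    (⊤ : Subgroup G).lowerCentralSeries (p - 2) ≤ Subgroup.closure {x : G | ∃ g : G, g ^ p = x} := by
  have : Fact p.Prime := ⟨hp⟩
  set N := closure {x : G | ∃ g : G, g ^ p = x}
  set π := QuotientGroup.mk' N
  have hexp : ∀ q : G ⧸ N, q ^ p = 1 := by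
    rintro ⟨g⟩
    exact (QuotientGroup.eq_one_iff _).mpr (subset_closure ⟨g, rfl⟩)
  have hK : ∀ K : Subgroup (G ⧸ N), K.index = p ^ i → IsMulCommutative K := by
    intro K hK
    rw [← map_comap_eq_self_of_surjective (QuotientGroup.mk'_surjective N) K]
    refine (hM _ ?_).isMulCommutative_map π fun g => hexp (π g)
    rw [index_comap_of_surjective _ (QuotientGroup.mk'_surjective N), hK]
  have hclass := nilpotencyClass_le_of_forall_index_eq_prime_pow hexp hK
  have := (IsPGroup.of_forall_pow_eq_one hexp).isNilpotent
  have hp3 : 3 ≤ p := by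
    obtain ⟨m, rfl⟩ := hodd
    have := hp.two_le
    omega
  rw [← QuotientGroup.ker_mk' N, ← Subgroup.map_eq_bot_iff, map_lowerCentralSeries,
    map_top_of_surjective _ (QuotientGroup.mk'_surjective N),
    Subgroup.lowerCentralSeries_eq_bot_iff_nilpotencyClass_le]
  omega

theorem stmt1 (p i : ℕ) (hp : p.Prime) (hodd : Odd p) (G : Type*) [Group G] [Finite G]
    (hG : IsPGroup p G) (hi : i ≤ p - 3)
    (hM : ∀ H : Subgroup G, H.index = p ^ i → IsPowerfulOdd p H) :
    (⊤ : Subgroup G).lowerCentralSeries (p - 2) ≤ Subgroup.closure {x : G | ∃ g : G, g ^ p = x} :=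
  stmt1_general p i hp hodd G hi hM
end

section
/- Let G be a finite p-group with minimal number of generators d(G) ≥ i+2, and suppose every subgroup of index p^i in G is powerful. Then G itself is powerful. -/
/-!
Adjoining to a subgroup `H` one element outside it raises the rank by at most one and splits off
at least one prime factor of the index, so `d(G) ≤ d(H) + Ω [G : H]`. Hence, in a `p`-group with
`d(G) ≥ i + 2`, the subgroup generated by two elements `x, y` has index divisible by `p ^ i` and
therefore lies in a subgroup `H` of index `p ^ i`. Since `H` is powerful, `[x, y]` is a product of
`p`-th (for `p = 2`, fourth) powers of elements of `H`.
-/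

/-- A finite `p`-group is powerful if `[G,G] ≤ G^p` for odd `p`,
and `[G,G] ≤ G^4` for `p = 2`. -/
def IsPowerful (p : ℕ) (G : Type*) [Group G] : Prop :=
  if p = 2 then commutator G ≤ Subgroup.closure {x : G | ∃ g : G, g ^ 4 = x}
  else commutator G ≤ Subgroup.closure {x : G | ∃ g : G, g ^ p = x}

open Subgroup ArithmeticFunction
open scoped ArithmeticFunction.Omega

section

variable {G : Type*} [Group G]

theorem Subgroup.rank_sup_closure_singleton_le [Finite G] (H : Subgroup G) (t : G) :
    Group.rank ↥(H ⊔ closure {t}) ≤ Group.rank H + 1 := by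
  classical
  obtain ⟨S, hS, hSH⟩ := Group.rank_spec H
  have hclosure :
      closure ((insert t (S.image H.subtype) : Finset G) : Set G) = H ⊔ closure {t} := by
    rw [Finset.coe_insert, Finset.coe_image, Set.insert_eq, closure_union,
      ← MonoidHom.map_closure, hSH, ← MonoidHom.range_eq_map, range_subtype, sup_comm]
  calc Group.rank ↥(H ⊔ closure {t})
      = Group.rank (closure ((insert t (S.image H.subtype) : Finset G) : Set G)) :=
        rank_congr hclosure.symm
    _ ≤ (insert t (S.image H.subtype)).card := rank_closure_finset_le_card _
    _ ≤ S.card + 1 := (Finset.card_insert_le _ _).trans (by gcongr; exact Finset.card_image_le)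
    _ = Group.rank H + 1 := by rw [hS]

theorem Group.rank_le_rank_add_cardFactors_index [Finite G] (H : Subgroup G) :
    Group.rank G ≤ Group.rank H + Ω H.index := by
  induction H using WellFoundedGT.induction with
  | _ H ih =>
  by_cases hH : H = ⊤
  · subst hH
    simp [Group.rank_congr topEquiv]
  obtain ⟨t, -, htH⟩ := SetLike.exists_of_lt (lt_top_iff_ne_top.mpr hH)
  set K := H ⊔ closure {t}
  have hHK : H < K := SetLike.lt_iff_le_and_exists.mpr
    ⟨le_sup_left, t, mem_sup_right (mem_closure_singleton_self t), htH⟩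
  have hindex : H.relIndex K * K.index = H.index := relIndex_mul_index hHK.le
  have hindex0 : H.relIndex K * K.index ≠ 0 := hindex ▸ index_ne_zero_of_finite
  have hrel : 1 ≤ Ω (H.relIndex K) := cardFactors_pos_iff_one_lt.mpr <|
    Nat.one_lt_iff_ne_zero_and_ne_one.mpr
      ⟨left_ne_zero_of_mul hindex0, mt relIndex_eq_one.mp hHK.not_ge⟩
  have hΩ : Ω H.index = Ω (H.relIndex K) + Ω K.index := by
    rw [← hindex, cardFactors_mul (left_ne_zero_of_mul hindex0) (right_ne_zero_of_mul hindex0)]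
  have hrankG : Group.rank G ≤ Group.rank K + Ω K.index := ih K hHK
  have hrankK : Group.rank K ≤ Group.rank H + 1 := H.rank_sup_closure_singleton_le t
  omega

theorem IsPGroup.exists_le_index_eq_pow [Finite G] {p : ℕ} [Fact p.Prime] (hG : IsPGroup p G)
    (H : Subgroup G) {i : ℕ} (hi : p ^ i ∣ H.index) :
    ∃ K : Subgroup G, H ≤ K ∧ K.index = p ^ i := by
  have hp : p.Prime := Fact.out
  obtain ⟨n, hn⟩ := IsPGroup.iff_card.mp hG
  obtain ⟨m, hm⟩ := IsPGroup.iff_card.mp (hG.to_subgroup H)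
  have hmi : m + i ≤ n := by
    rw [← Nat.pow_dvd_pow_iff_le_right hp.one_lt, ← hn, ← H.card_mul_index, hm, pow_add]
    exact mul_dvd_mul_left _ hi
  obtain ⟨K, hK, hHK⟩ := Sylow.exists_subgroup_card_pow_prime_le p
    (pow_dvd_pow p (Nat.sub_le n i) |>.trans hn.symm.dvd) H hm (by omega)
  refine ⟨K, hHK, Nat.eq_of_mul_eq_mul_left (pow_pos hp.pos (n - i)) ?_⟩
  rw [← pow_add, Nat.sub_add_cancel (by omega), ← hn, ← K.card_mul_index, hK]

theorem IsPGroup.exists_closure_le_index_eq_pow [Finite G] {p : ℕ} [Fact p.Prime]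
    (hG : IsPGroup p G) (s : Finset G) {i : ℕ} (hs : s.card + i ≤ Group.rank G) :
    ∃ K : Subgroup G, closure (s : Set G) ≤ K ∧ K.index = p ^ i := by
  obtain ⟨k, hk⟩ := hG.index (closure (s : Set G))
  have hrank := Group.rank_le_rank_add_cardFactors_index (closure (s : Set G))
  rw [hk, cardFactors_apply_prime_pow Fact.out] at hrank
  have hrank_closure := rank_closure_finset_le_card s
  exact hG.exists_le_index_eq_pow _ (hk ▸ pow_dvd_pow p (by omega))

theorem commutator_le_closure_pow_of_forall_exists (q : ℕ)
    (h : ∀ x y : G, ∃ H : Subgroup G, x ∈ H ∧ y ∈ H ∧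
      commutator H ≤ closure {z : H | ∃ g : H, g ^ q = z}) :
    commutator G ≤ closure {z : G | ∃ g : G, g ^ q = z} := by
  rw [commutator_def, commutator_le]
  intro x _ y _
  obtain ⟨H, hx, hy, hH⟩ := h x y
  have hpow : closure {z : H | ∃ g : H, g ^ q = z} ≤
      (closure {z : G | ∃ g : G, g ^ q = z}).comap H.subtype := by
    rw [closure_le]
    rintro _ ⟨g, rfl⟩
    exact subset_closure ⟨g, rfl⟩
  exact hpow <| hH <|
    commutator_mem_commutator (mem_top (⟨x, hx⟩ : H)) (mem_top (⟨y, hy⟩ : H))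

theorem isPowerful_iff (p : ℕ) :
    IsPowerful p G ↔
      commutator G ≤ closure {x : G | ∃ g : G, g ^ (if p = 2 then 4 else p) = x} := by
  unfold IsPowerful
  split_ifs <;> rfl

end

theorem stmt2 (p i : ℕ) (hp : p.Prime) (G : Type*) [Group G] [Finite G]
    (hG : IsPGroup p G) (hd : i + 2 ≤ Group.rank G)
    (hM : ∀ H : Subgroup G, H.index = p ^ i → IsPowerful p H) :
    IsPowerful p G := by
  classical
  have := Fact.mk hp
  rw [isPowerful_iff]
  refine commutator_le_closure_pow_of_forall_exists _ fun x y => ?_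
  obtain ⟨H, hxy, hH⟩ := hG.exists_closure_le_index_eq_pow {x, y} (i := i)
    (by have := Finset.card_le_two (a := x) (b := y); omega)
  exact ⟨H, hxy (subset_closure (by simp)), hxy (subset_closure (by simp)),
    (isPowerful_iff p).mp (hM H hH)⟩
end

section
/- Let p be an odd prime and G = ⟨a,b⟩ a finite p-group generated by two elements a,b each of order p, such that every maximal subgroup of G is powerful. Then G has exponent p. -/
/-
Induct on `|G|`. Quotienting by a central subgroup `N` of order `p` preserves the hypotheses, so
by induction every `p`-th power of `G` lies in `N`. Assume `G` is not abelian and let `u, v` be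
the two generators. The normal closure `A` of `u` has index `p`: `G ⧸ A` is generated by the
image of `v`, and `A ≠ G` because a `p`-group that is the normal closure of a single element is
abelian. As `A` is powerful, `⁅A, A⁆ ≤ A ^ p ≤ N` is central of exponent `p`, so for odd `p` the
`p`-power map is multiplicative on `A` (since `p ∣ p.choose 2`). Hence `A`, generated by the
conjugates of `u`, has exponent `p`, and then powerfulness forces `⁅A, A⁆ = 1`. As
`commutator G ≤ A`, the derived subgroup has exponent `p` and commutes with `u`. Applying this to
both generators, `G` has class at most two with `commutator G` of exponent `p`, and a group of
this kind generated by elements of order `p` has exponent `p`.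
-/

open Subgroup
open scoped commutatorElement

section PowerMap

variable {G : Type*} [Group G]

theorem mul_pow_eq_mul_pow_mul_pow_choose_two {x y c : G} (h : y * x = x * y * c)
    (hcx : Commute c x) (hcy : Commute c y) (n : ℕ) :
    (x * y) ^ n = x ^ n * y ^ n * c ^ n.choose 2 := by
  have hpow_mul : ∀ k : ℕ, y ^ k * x = x * y ^ k * c ^ k := fun k => by
    have hsemi : SemiconjBy x (y * c) y := by rw [SemiconjBy, ← mul_assoc, h]
    rw [← (hsemi.pow_right k).eq, mul_assoc, hcy.symm.mul_pow]
  induction n with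
  | zero => simp
  | succ n ih =>
    have hxy : Commute (c ^ n.choose 2) (x * y) := (hcx.mul_right hcy).pow_left _
    calc (x * y) ^ (n + 1) = x ^ n * (y ^ n * x) * y * c ^ n.choose 2 := by
          rw [pow_succ, ih, mul_assoc, hxy.eq]; simp only [mul_assoc]
    _ = x ^ (n + 1) * y ^ (n + 1) * (c ^ n * c ^ n.choose 2) := by
          rw [hpow_mul, pow_succ, pow_succ]
          simp only [mul_assoc]
          rw [← mul_assoc (c ^ n) y, (hcy.pow_left n).eq, mul_assoc]
    _ = x ^ (n + 1) * y ^ (n + 1) * c ^ (n + 1).choose 2 := by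
          rw [← pow_add, Nat.choose_succ_succ', Nat.choose_one_right]

theorem Odd.dvd_choose_two {p : ℕ} (hp : Odd p) : p ∣ p.choose 2 := by
  obtain ⟨m, rfl⟩ := hp
  exact ⟨m, by rw [Nat.choose_two_right, Nat.add_sub_cancel, mul_comm 2 m, ← mul_assoc,
    Nat.mul_div_cancel _ two_pos]⟩

theorem mul_pow_eq_mul_pow_of_commutator_le {p : ℕ} (hodd : Odd p) {M N : Subgroup G}
    (hMN : ⁅M, M⁆ ≤ N) (hN : N ≤ center G) (hNp : ∀ c ∈ N, c ^ p = 1) {x y : G}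
    (hx : x ∈ M) (hy : y ∈ M) : (x * y) ^ p = x ^ p * y ^ p := by
  have hc : ⁅y⁻¹, x⁻¹⁆ ∈ N := hMN (commutator_mem_commutator (inv_mem hy) (inv_mem hx))
  have hcentral := mem_center_iff.mp (hN hc)
  obtain ⟨k, hk⟩ := hodd.dvd_choose_two
  rw [mul_pow_eq_mul_pow_mul_pow_choose_two (by rw [commutatorElement_def]; group)
    (hcentral x).symm (hcentral y).symm, hk, pow_mul, hNp _ hc, one_pow, mul_one]

theorem pow_eq_one_of_mem_closure {S : Set G} {n : ℕ}
    (hmul : ∀ x ∈ closure S, ∀ y ∈ closure S, (x * y) ^ n = x ^ n * y ^ n)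
    (hS : ∀ s ∈ S, s ^ n = 1) {x : G} (hx : x ∈ closure S) : x ^ n = 1 := by
  induction hx using closure_induction with
  | mem s hs => exact hS s hs
  | one => exact one_pow n
  | mul x y hx hy hxn hyn => rw [hmul x hx y hy, hxn, hyn, one_mul]
  | inv x _ hxn => rw [inv_pow, hxn, inv_one]

end PowerMap

section Powerful

variable {p : ℕ}

theorem IsPowerfulOdd.commutator_le {G : Type*} [Group G] {M N : Subgroup G}
    (hM : IsPowerfulOdd p M) (hN : ∀ g ∈ M, g ^ p ∈ N) : ⁅M, M⁆ ≤ N := by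
  rw [← M.map_subtype_commutator]
  refine (map_mono hM).trans ?_
  rw [MonoidHom.map_closure, closure_le]
  rintro _ ⟨_, ⟨g, rfl⟩, rfl⟩
  exact hN g g.2

theorem IsPowerfulOdd.of_surjective {H K : Type*} [Group H] [Group K] {f : H →* K}
    (hf : Function.Surjective f) (h : IsPowerfulOdd p H) : IsPowerfulOdd p K := by
  have hcomm : (commutator H).map f = commutator K := by
    rw [map_commutator_eq, MonoidHom.range_eq_top.mpr hf]
    rfl
  rw [IsPowerfulOdd, ← hcomm]
  refine (map_mono h).trans ?_
  rw [MonoidHom.map_closure, closure_le]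
  rintro _ ⟨_, ⟨g, rfl⟩, rfl⟩
  exact subset_closure ⟨f g, (map_pow f g p).symm⟩

theorem forall_index_eq_isPowerfulOdd_of_surjective {G H : Type*} [Group G] [Group H]
    {f : G →* H} (hf : Function.Surjective f)
    (hM : ∀ M : Subgroup G, M.index = p → IsPowerfulOdd p M) :
    ∀ M : Subgroup H, M.index = p → IsPowerfulOdd p M := by
  intro M hindex
  have hpowerful := (hM (M.comap f) (by rwa [M.index_comap_of_surjective hf])).of_surjective
    (f.subgroupMap_surjective (M.comap f))
  rwa [map_comap_eq_self_of_surjective hf] at hpowerful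

end Powerful

section Quotients

variable {G : Type*} [Group G]

theorem card_quotient_lt_card [Finite G] {N : Subgroup G} [N.Normal] (hN : N ≠ ⊥) :
    Nat.card (G ⧸ N) < Nat.card G := by
  rw [← N.index_mul_card, index_eq_card]
  exact lt_mul_of_one_lt_right Nat.card_pos ((one_lt_card_iff_ne_bot N).mpr hN)

theorem commutator_le_of_isMulCommutative_quotient (H : Subgroup G) [H.Normal]
    [IsMulCommutative (G ⧸ H)] : commutator G ≤ H := by
  rw [← QuotientGroup.ker_mk' H, ← Subgroup.map_eq_bot_iff, map_commutator_eq,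
    MonoidHom.range_eq_top.mpr (QuotientGroup.mk'_surjective H), ← commutator_def,
    commutator_eq_bot]

theorem zpowers_mk_eq_top_of_closure_pair_eq_top {H : Subgroup G} [H.Normal] {u v : G}
    (hgen : closure {u, v} = ⊤) (hu : u ∈ H) : zpowers (v : G ⧸ H) = ⊤ := by
  rw [← map_top_of_surjective _ (QuotientGroup.mk'_surjective H), ← hgen,
    MonoidHom.map_closure, Set.image_pair, QuotientGroup.mk'_apply,
    (QuotientGroup.eq_one_iff u).mpr hu, closure_insert_one, zpowers_eq_closure]
  rfl

theorem index_eq_of_closure_pair_eq_top {p : ℕ} [Fact p.Prime] {H : Subgroup G} [H.Normal]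
    {u v : G} (hgen : closure {u, v} = ⊤) (hu : u ∈ H) (hv : v ∉ H) (hvp : v ^ p = 1) :
    H.index = p := by
  rw [index_eq_card, ← card_top, ← zpowers_mk_eq_top_of_closure_pair_eq_top hgen hu,
    Nat.card_zpowers]
  exact orderOf_eq_prime (by rw [← QuotientGroup.mk_pow, hvp, QuotientGroup.mk_one])
    (by rwa [Ne, QuotientGroup.eq_one_iff])

end Quotients

section PGroup

variable {G : Type*} [Group G] {p : ℕ}

theorem IsPGroup.isMulCommutative_of_normalClosure_eq_top [Fact p.Prime] [Finite G]
    (hG : IsPGroup p G) {u : G} (hu : normalClosure {u} = ⊤) : IsMulCommutative G := by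
  induction h : Nat.card G using Nat.strong_induction_on generalizing G with
  | _ n ih =>
  rcases subsingleton_or_nontrivial G with hG1 | hG1
  · infer_instance
  have hquot : normalClosure {(u : G ⧸ center G)} = ⊤ := by
    rw [← Set.image_singleton, ← QuotientGroup.coe_mk',
      ← map_normalClosure _ _ (QuotientGroup.mk'_surjective _), hu,
      map_top_of_surjective _ (QuotientGroup.mk'_surjective _)]
  have : IsMulCommutative (G ⧸ center G) :=
    ih _ (h ▸ card_quotient_lt_card hG.bot_lt_center.ne') (hG.to_quotient _) hquot rfl
  have : IsCyclic (G ⧸ center G) := isCyclic_iff_exists_zpowers_eq_top.mpr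
    ⟨u, top_le_iff.mp (hquot ▸ normalClosure_le_normal (Set.singleton_subset_iff.mpr
      (mem_zpowers _)))⟩
  exact isMulCommutative_of_isCyclic_quotient_center_self G

theorem IsPGroup.exists_ne_bot_le_center_pow_eq_one [Fact p.Prime] [Finite G] [Nontrivial G]
    (hG : IsPGroup p G) :
    ∃ N : Subgroup G, N.Normal ∧ N ≠ ⊥ ∧ N ≤ center G ∧ ∀ c ∈ N, c ^ p = 1 := by
  have := hG.center_nontrivial
  obtain ⟨z, hz⟩ := exists_prime_orderOf_dvd_card' (G := center G) p
    (((hG.to_subgroup _).card_eq_or_dvd).resolve_left Finite.one_lt_card.ne')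
  have hNc : zpowers (z : G) ≤ center G := zpowers_le.mpr z.2
  refine ⟨zpowers (z : G), ⟨fun x hx g => ?_⟩, ?_, hNc, ?_⟩
  · rwa [mem_center_iff.mp (hNc hx) g, mul_inv_cancel_right]
  · rw [Ne, zpowers_eq_bot, ← orderOf_eq_one_iff, Subgroup.orderOf_coe, hz]
    exact (Fact.out : p.Prime).ne_one
  · rintro _ ⟨k, rfl⟩
    rw [← zpow_natCast, ← zpow_mul, mul_comm, zpow_mul, zpow_natCast, ← hz,
      ← Subgroup.orderOf_coe, pow_orderOf_eq_one, one_zpow]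

end PGroup

section Main

variable {G : Type*} [Group G] {p : ℕ}

theorem commutator_le_normalClosure_of_closure_pair_eq_top {u v : G}
    (hgen : closure {u, v} = ⊤) : commutator G ≤ normalClosure {u} := by
  have : IsCyclic (G ⧸ normalClosure {u}) := isCyclic_iff_exists_zpowers_eq_top.mpr
    ⟨_, zpowers_mk_eq_top_of_closure_pair_eq_top hgen (subset_normalClosure rfl)⟩
  exact commutator_le_of_isMulCommutative_quotient _

theorem IsPGroup.index_normalClosure_eq [Fact p.Prime] [Finite G] (hG : IsPGroup p G)
    (hG' : commutator G ≠ ⊥) {u v : G} (hgen : closure {u, v} = ⊤) (hv : v ^ p = 1) :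
    (normalClosure {u}).index = p := by
  refine index_eq_of_closure_pair_eq_top hgen (subset_normalClosure rfl) (fun hvu => hG' ?_) hv
  have : normalClosure {u} = ⊤ := top_le_iff.mp <| hgen ▸ closure_le _ |>.mpr <|
    Set.insert_subset (subset_normalClosure rfl) (Set.singleton_subset_iff.mpr hvu)
  have := hG.isMulCommutative_of_normalClosure_eq_top this
  exact commutator_eq_bot G

theorem pow_eq_one_of_mem_normalClosure (hodd : Odd p) {u : G} (hu : u ^ p = 1)
    (hA : IsPowerfulOdd p (normalClosure {u})) {N : Subgroup G} (hNc : N ≤ center G)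
    (hNp : ∀ c ∈ N, c ^ p = 1) (hpowN : ∀ g : G, g ^ p ∈ N) {x : G}
    (hx : x ∈ normalClosure {u}) : x ^ p = 1 := by
  refine pow_eq_one_of_mem_closure (fun x hx y hy => ?_) (fun s hs => ?_) hx
  · exact mul_pow_eq_mul_pow_of_commutator_le hodd (hA.commutator_le fun g _ => hpowN g)
      hNc hNp hx hy
  · obtain ⟨_, rfl, hconj⟩ := Group.mem_conjugatesOfSet_iff.mp hs
    obtain ⟨c, rfl⟩ := isConj_iff.mp hconj
    rw [conj_pow, hu, mul_one, mul_inv_cancel]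

theorem IsPGroup.commutator_le_centralizer_of_pow_mem [Fact p.Prime] (hodd : Odd p) [Finite G]
    (hG : IsPGroup p G) (hM : ∀ M : Subgroup G, M.index = p → IsPowerfulOdd p M)
    (hG' : commutator G ≠ ⊥) {N : Subgroup G} (hNc : N ≤ center G)
    (hNp : ∀ c ∈ N, c ^ p = 1) (hpowN : ∀ g : G, g ^ p ∈ N) {u v : G}
    (hgen : closure {u, v} = ⊤) (hu : u ^ p = 1) (hv : v ^ p = 1) :
    commutator G ≤ centralizer {u} ∧ ∀ c ∈ commutator G, c ^ p = 1 := by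
  have hA := hM _ (hG.index_normalClosure_eq hG' hgen hv)
  have hexp : ∀ x ∈ normalClosure {u}, x ^ p = 1 := fun x hx =>
    pow_eq_one_of_mem_normalClosure hodd hu hA hNc hNp hpowN hx
  have hcomm : ⁅normalClosure {u}, normalClosure {u}⁆ = ⊥ := by
    refine le_bot_iff.mp (hA.commutator_le fun g hg => ?_)
    rw [hexp g hg]
    exact one_mem _
  have hle := commutator_le_normalClosure_of_closure_pair_eq_top hgen
  refine ⟨fun c hc => ?_, fun c hc => hexp c (hle hc)⟩
  have hcA : c ∈ centralizer (normalClosure {u} : Set G) :=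
    commutator_eq_bot_iff_le_centralizer.mp hcomm (hle hc)
  exact centralizer_le subset_normalClosure hcA

theorem IsPGroup.pow_eq_one_of_closure_pair_eq_top [Fact p.Prime] (hodd : Odd p) [Finite G]
    (hG : IsPGroup p G) {a b : G} (hgen : closure {a, b} = ⊤) (ha : a ^ p = 1) (hb : b ^ p = 1)
    (hM : ∀ M : Subgroup G, M.index = p → IsPowerfulOdd p M) (g : G) : g ^ p = 1 := by
  induction h : Nat.card G using Nat.strong_induction_on generalizing G with
  | _ n ih =>
  suffices hclass : commutator G ≤ center G ∧ ∀ c ∈ commutator G, c ^ p = 1 by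
    refine pow_eq_one_of_mem_closure (fun x _ y _ => ?_) ?_ (hgen ▸ mem_top g)
    · exact mul_pow_eq_mul_pow_of_commutator_le hodd le_rfl hclass.1 hclass.2 (mem_top x)
        (mem_top y)
    · rintro s (rfl | rfl) <;> assumption
  by_cases hG' : commutator G = ⊥
  · simp [hG']
  have : Nontrivial G := by
    by_contra! hG1
    exact hG' (Subsingleton.elim _ _)
  obtain ⟨N, _, hN, hNc, hNp⟩ := hG.exists_ne_bot_le_center_pow_eq_one
  have hpowN : ∀ g : G, g ^ p ∈ N := by
    intro g
    have hquot := ih _ (h ▸ card_quotient_lt_card hN) (hG.to_quotient _) (a := a) (b := b)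
      (by rw [← Set.image_pair, ← QuotientGroup.coe_mk', ← MonoidHom.map_closure, hgen,
        map_top_of_surjective _ (QuotientGroup.mk'_surjective _)])
      (by rw [← QuotientGroup.mk_pow, ha, QuotientGroup.mk_one])
      (by rw [← QuotientGroup.mk_pow, hb, QuotientGroup.mk_one])
      (forall_index_eq_isPowerfulOdd_of_surjective (QuotientGroup.mk'_surjective _) hM) g rfl
    rwa [← QuotientGroup.mk_pow, QuotientGroup.eq_one_iff] at hquot
  have hA := hG.commutator_le_centralizer_of_pow_mem hodd hM hG' hNc hNp hpowN hgen ha hb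
  have hB := hG.commutator_le_centralizer_of_pow_mem hodd hM hG' hNc hNp hpowN
    (Set.pair_comm a b ▸ hgen) hb ha
  refine ⟨?_, hA.2⟩
  rw [center_eq_iInf hgen]
  refine le_iInf₂ fun s hs => ?_
  rcases hs with rfl | rfl
  exacts [hA.1, hB.1]

end Main

theorem stmt3 (p : ℕ) (hp : p.Prime) (hodd : Odd p) (G : Type*) [Group G] [Finite G]
    (hG : IsPGroup p G) (a b : G) (hgen : Subgroup.closure ({a, b} : Set G) = ⊤)
    (ha : orderOf a = p) (hb : orderOf b = p)
    (hM : ∀ M : Subgroup G, M.index = p → IsPowerfulOdd p M) :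
    Monoid.exponent G = p := by
  have : Fact p.Prime := ⟨hp⟩
  have hexp := hG.pow_eq_one_of_closure_pair_eq_top hodd hgen (ha ▸ pow_orderOf_eq_one a)
    (hb ▸ pow_orderOf_eq_one b) hM
  exact Nat.dvd_antisymm (Monoid.exponent_dvd_of_forall_pow_eq_one hexp)
    (ha ▸ Monoid.order_dvd_exponent a)
end

section
/- Let G be a group with normal nilpotent subgroups M and N of nilpotency classes a and b respectively. Then MN is a normal nilpotent subgroup of G of nilpotency class at most a+b. -/
/-! Write `γᵢ` for the lower central series in the classical indexing, extended by `γ₀ = ⊤`.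
Since all the subgroups involved are normal, a commutator with `M ⊔ N` raises one of the two
indices: `⁅γᵢ M ⊓ γⱼ N, M ⊔ N⁆ ≤ γᵢ₊₁ M ⊓ γⱼ N ⊔ γᵢ M ⊓ γⱼ₊₁ N`. By induction `γₙ (M ⊔ N)`
lies in the join of the `γᵢ M ⊓ γⱼ N` with `i + j = n`, and for `n = a + b + 1` each of these
has `i > a` or `j > b`, hence is trivial. -/

namespace Subgroup

variable {G : Type*} [Group G]

theorem commutator_le_iff_le_comap_centralizer {H K L : Subgroup G} [L.Normal] :
    ⁅H, K⁆ ≤ L ↔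
      H ≤ (centralizer (K.map (QuotientGroup.mk' L) : Set (G ⧸ L))).comap
        (QuotientGroup.mk' L) := by
  conv_lhs => rw [← QuotientGroup.ker_mk' L]
  rw [← Subgroup.map_eq_bot_iff, map_commutator, commutator_eq_bot_iff_le_centralizer,
    map_le_iff_le_comap]

theorem iSup_commutator_le_iff {ι : Sort*} {H : ι → Subgroup G} {K L : Subgroup G} [L.Normal] :
    ⁅⨆ i, H i, K⁆ ≤ L ↔ ∀ i, ⁅H i, K⁆ ≤ L := by
  simp only [commutator_le_iff_le_comap_centralizer, iSup_le_iff]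

theorem sup_commutator_le_iff {H₁ H₂ K L : Subgroup G} [L.Normal] :
    ⁅H₁ ⊔ H₂, K⁆ ≤ L ↔ ⁅H₁, K⁆ ≤ L ∧ ⁅H₂, K⁆ ≤ L := by
  simp only [commutator_le_iff_le_comap_centralizer, sup_le_iff]

theorem commutator_inf_sup_le {A A' B B' : Subgroup G} (M N : Subgroup G)
    [A.Normal] [A'.Normal] [B.Normal] [B'.Normal] (hA : ⁅A, M⁆ ≤ A') (hB : ⁅B, N⁆ ≤ B') :
    ⁅A ⊓ B, M ⊔ N⁆ ≤ A' ⊓ B ⊔ A ⊓ B' := by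
  rw [commutator_comm, sup_commutator_le_iff, commutator_comm M, commutator_comm N]
  exact ⟨le_sup_of_le_left <| le_inf ((commutator_mono inf_le_left le_rfl).trans hA)
      ((commutator_mono inf_le_right le_rfl).trans (commutator_le_left B M)),
    le_sup_of_le_right <| le_inf
      ((commutator_mono inf_le_left le_rfl).trans (commutator_le_left A N))
      ((commutator_mono inf_le_right le_rfl).trans hB)⟩

/-- `γ₀ = ⊤` and `γᵢ₊₁ = S.lowerCentralSeries i`, i.e. `γ₁ = S` as in the classical indexing. -/
def lowerCentralSeriesWithTop (S : Subgroup G) : ℕ → Subgroup G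
  | 0 => ⊤
  | i + 1 => S.lowerCentralSeries i

variable (S : Subgroup G)

instance lowerCentralSeriesWithTop_normal [S.Normal] (i : ℕ) :
    (S.lowerCentralSeriesWithTop i).Normal := by
  cases i <;> simp only [lowerCentralSeriesWithTop] <;> infer_instance

theorem lowerCentralSeriesWithTop_antitone : Antitone S.lowerCentralSeriesWithTop := by
  refine antitone_nat_of_succ_le fun i => ?_
  cases i with
  | zero => exact le_top
  | succ i => exact S.lowerCentralSeries_antitone i.le_succ

theorem commutator_lowerCentralSeriesWithTop_le [S.Normal] (i : ℕ) :
    ⁅S.lowerCentralSeriesWithTop i, S⁆ ≤ S.lowerCentralSeriesWithTop (i + 1) := by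
  cases i with
  | zero => exact commutator_le_right _ _
  | succ i => exact le_rfl

theorem lowerCentralSeries_sup_le (M N : Subgroup G) [M.Normal] [N.Normal] (n : ℕ) :
    (M ⊔ N).lowerCentralSeries n ≤
      ⨆ (i) (j) (_ : i + j = n + 1),
        M.lowerCentralSeriesWithTop i ⊓ N.lowerCentralSeriesWithTop j := by
  induction n with
  | zero =>
    exact sup_le (le_iSup₂_of_le 1 0 <| le_iSup_of_le rfl <| le_inf le_rfl le_top)
      (le_iSup₂_of_le 0 1 <| le_iSup_of_le rfl <| le_inf le_top le_rfl)
  | succ n ih =>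
    refine (commutator_mono ih le_rfl).trans ?_
    simp only [iSup_commutator_le_iff]
    intro i j hij
    refine (commutator_inf_sup_le M N (commutator_lowerCentralSeriesWithTop_le M i)
      (commutator_lowerCentralSeriesWithTop_le N j)).trans (sup_le ?_ ?_)
    · exact le_iSup₂_of_le (i + 1) j <| le_iSup_of_le (by omega) le_rfl
    · exact le_iSup₂_of_le i (j + 1) <| le_iSup_of_le (by omega) le_rfl

theorem lowerCentralSeries_sup_eq_bot {M N : Subgroup G} [M.Normal] [N.Normal] {a b : ℕ}
    (hM : M.lowerCentralSeries a = ⊥) (hN : N.lowerCentralSeries b = ⊥) :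
    (M ⊔ N).lowerCentralSeries (a + b) = ⊥ := by
  refine eq_bot_iff.2 <| (lowerCentralSeries_sup_le M N (a + b)).trans <| iSup₂_le fun i j =>
    iSup_le fun hij => ?_
  rcases le_or_gt (a + 1) i with hi | hi
  · exact inf_le_left.trans ((M.lowerCentralSeriesWithTop_antitone hi).trans hM.le)
  · have hj : b + 1 ≤ j := by omega
    exact inf_le_right.trans ((N.lowerCentralSeriesWithTop_antitone hj).trans hN.le)

theorem top_lowerCentralSeries_eq_bot_iff (H : Subgroup G) (n : ℕ) :
    (⊤ : Subgroup H).lowerCentralSeries n = ⊥ ↔ H.lowerCentralSeries n = ⊥ := by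
  rw [← map_subtype_inj, map_bot, top_subtype_lowerCentralSeries]

end Subgroup

theorem stmt16 (G : Type*) [Group G] (M N : Subgroup G) (hM : M.Normal) (hN : N.Normal)
    (a b : ℕ) (hMa : (⊤ : Subgroup M).lowerCentralSeries a = ⊥)
    (hNb : (⊤ : Subgroup N).lowerCentralSeries b = ⊥) :
    (M ⊔ N).Normal ∧ (⊤ : Subgroup ↥(M ⊔ N)).lowerCentralSeries (a + b) = ⊥ := by
  rw [Subgroup.top_lowerCentralSeries_eq_bot_iff] at hMa hNb ⊢
  exact ⟨Subgroup.sup_normal M N, Subgroup.lowerCentralSeries_sup_eq_bot hMa hNb⟩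
end
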